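/- arXiv:1004.2008 — 2 statements merged into one kernel-verified Lean document; each statement's English description precedes it below -/
import Mathlib

section
/- If rank(X₁) < rank(X), then the Nyström approximation is not exact: Xᵀ X₁ (X₁ᵀX₁)⁺ X₁ᵀ X ≠ XᵀX. -/
open Matrix

/-- `B` is the Moore–Penrose pseudoinverse of `A`. -/
def IsMoorePenrose {l : ℕ} (A B : Matrix (Fin l) (Fin l) ℝ) : Prop :=
  A * B * A = A ∧ B * A * B = B ∧ (A * B)ᵀ = A * B ∧ (B * A)ᵀ = B * A

theorem Matrix.rank_mul_mul_le_middle {R k m n o : Type*} [Fintype m] [Fintype n] [Fintype o]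
    [CommSemiring R] [StrongRankCondition R]
    (A : Matrix k m R) (B : Matrix m n R) (C : Matrix n o R) : (A * B * C).rank ≤ B.rank :=
  (rank_mul_le_left _ C).trans (rank_mul_le_right A B)

theorem nystrom_not_exact_general (m n l : ℕ)
    (X : Matrix (Fin m) (Fin n) ℝ)
    (X₁ : Matrix (Fin m) (Fin l) ℝ)
    (hrank : X₁.rank < X.rank)
    (Wp : Matrix (Fin l) (Fin l) ℝ) :
    Xᵀ * X₁ * Wp * X₁ᵀ * X ≠ Xᵀ * X := by
  intro h
  have hle : (Xᵀ * X).rank ≤ X₁.rank := by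
    rw [← h, Matrix.mul_assoc _ Wp, Matrix.mul_assoc _ (Wp * X₁ᵀ)]
    exact rank_mul_mul_le_middle _ _ _
  rw [rank_transpose_mul_self] at hle
  omega

theorem nystrom_not_exact (m n l : ℕ)
    (X : Matrix (Fin m) (Fin n) ℝ)
    (f : Fin l → Fin n) (X₁ : Matrix (Fin m) (Fin l) ℝ)
    (hX₁ : X₁ = X.submatrix id f)
    (hrank : X₁.rank < X.rank)
    (Wp : Matrix (Fin l) (Fin l) ℝ) (hWp : IsMoorePenrose (X₁ᵀ * X₁) Wp) :
    Xᵀ * X₁ * Wp * X₁ᵀ * X ≠ Xᵀ * X :=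
  nystrom_not_exact_general m n l X X₁ hrank Wp
end

section
/- Let G be a rank-r SPSD matrix and let l columns be chosen such that the corresponding principal submatrix W also has rank r. Then the rank-k Nyström approximation with any k ≥ r is exact: G = C W_k⁺ Cᵀ, where W_k is the best rank-k approximation of W. -/
open Matrix

/-- Squared Frobenius norm. -/
def frobSq {l : ℕ} (A : Matrix (Fin l) (Fin l) ℝ) : ℝ :=
  ∑ i, ∑ j, (A i j) ^ 2

/-!
Factor `G = Aᴴ * A` and let `A₁` be the sampled columns of `A`, so that `W = A₁ᴴ * A₁` and
`C = Aᴴ * A₁`. Since `rank A₁ = rank W = rank G = rank A`, the columns of `A` lie in the column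
space of `A₁`, say `A = A₁ * Z`. Every generalized inverse `P` of `W` satisfies `A₁ * P * W = A₁`
(the defect `N` has `A₁ᴴ * N = 0`, hence `Nᴴ * N = 0`), so
`C * P * Cᴴ = Aᴴ * (A₁ * P * W) * Z = Aᴴ * A₁ * Z = G`. Finally `rank W ≤ k` makes `W` its own best
rank-`k` approximation, so `W_k = W`.
-/

lemma frobSq_nonneg {l : ℕ} (A : Matrix (Fin l) (Fin l) ℝ) : 0 ≤ frobSq A :=
  Finset.sum_nonneg fun _ _ => Finset.sum_nonneg fun _ _ => sq_nonneg _

lemma frobSq_eq_zero_iff {l : ℕ} {A : Matrix (Fin l) (Fin l) ℝ} : frobSq A = 0 ↔ A = 0 := by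
  rw [frobSq, Fintype.sum_eq_zero_iff_of_nonneg fun i => by positivity, ← Matrix.ext_iff]
  simp_rw [funext_iff, Pi.zero_apply, Fintype.sum_eq_zero_iff_of_nonneg fun j => sq_nonneg _,
    funext_iff, Pi.zero_apply, sq_eq_zero_iff, Matrix.zero_apply]

lemma eq_of_forall_frobSq_sub_le {l k : ℕ} {W Wk : Matrix (Fin l) (Fin l) ℝ} (hW : W.rank ≤ k)
    (hbest : ∀ M : Matrix (Fin l) (Fin l) ℝ, M.rank ≤ k → frobSq (W - Wk) ≤ frobSq (W - M)) :
    Wk = W := by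
  have h : frobSq (W - Wk) ≤ 0 := by simpa [frobSq] using hbest W hW
  exact (sub_eq_zero.mp (frobSq_eq_zero_iff.mp (h.antisymm (frobSq_nonneg _)))).symm

namespace Matrix

variable {R : Type*} {m n o : Type*}

theorem exists_mul_eq_of_range_mulVecLin_le [CommSemiring R] [Fintype n] [Fintype o]
    {A : Matrix m n R} {B : Matrix m o R}
    (h : LinearMap.range B.mulVecLin ≤ LinearMap.range A.mulVecLin) :
    ∃ Z : Matrix n o R, A * Z = B := by
  have hcol : ∀ j, ∃ z, A *ᵥ z = Bᵀ j := fun j =>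
    h (by rw [range_mulVecLin]; exact Submodule.subset_span ⟨j, rfl⟩)
  choose z hz using hcol
  refine ⟨(Matrix.of z)ᵀ, ?_⟩
  ext i j
  simpa [mul_apply, mulVec, dotProduct] using congrFun (hz j) i

theorem range_mulVecLin_mul_eq_of_rank_eq [Field R] [Fintype m] [Fintype n] [Fintype o]
    {A : Matrix m n R} {S : Matrix n o R} (h : (A * S).rank = A.rank) :
    LinearMap.range (A * S).mulVecLin = LinearMap.range A.mulVecLin :=
  Submodule.eq_of_le_of_finrank_le
    (by rw [mulVecLin_mul]; exact LinearMap.range_comp_le_range _ _) h.ge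

theorem mul_mul_conjTranspose_mul_self_eq_self [Field R] [PartialOrder R] [StarRing R]
    [StarOrderedRing R] [Fintype m] [Fintype n] {A : Matrix m n R} {P : Matrix n n R}
    (hP : Aᴴ * A * P * (Aᴴ * A) = Aᴴ * A) : A * P * (Aᴴ * A) = A := by
  set N := A * P * (Aᴴ * A) - A
  have hAN : Aᴴ * N = 0 := by
    rw [Matrix.mul_sub, ← Matrix.mul_assoc Aᴴ, ← Matrix.mul_assoc Aᴴ, hP, sub_self]
  have h : Nᴴ * N = 0 :=
    calc Nᴴ * N = (P * (Aᴴ * A))ᴴ * (Aᴴ * N) - Aᴴ * N := by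
          simp only [N, conjTranspose_sub, conjTranspose_mul, Matrix.sub_mul, Matrix.mul_assoc]
      _ = 0 := by rw [hAN, Matrix.mul_zero, sub_zero]
  rw [← sub_eq_zero, ← conjTranspose_mul_self_eq_zero, h]

open scoped ComplexOrder MatrixOrder in
theorem PosSemidef.eq_mul_mul_conjTranspose_of_rank_submatrix_eq {𝕜 ι κ : Type*} [RCLike 𝕜]
    [Fintype ι] [Fintype κ] {G : Matrix ι ι 𝕜} (hG : G.PosSemidef) (f : κ → ι)
    (hrank : (G.submatrix f f).rank = G.rank) {P : Matrix κ κ 𝕜}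
    (hP : G.submatrix f f * P * G.submatrix f f = G.submatrix f f) :
    G = G.submatrix id f * P * (G.submatrix id f)ᴴ := by
  classical
  obtain ⟨A, rfl⟩ : ∃ A : Matrix ι ι 𝕜, G = star A * A :=
    CStarAlgebra.nonneg_iff_eq_star_mul_self.mp hG.nonneg
  set A₁ := A.submatrix id f
  have hW : (star A * A).submatrix f f = A₁ᴴ * A₁ := by
    simp [A₁, submatrix_mul _ _ _ id _ Function.bijective_id, star_eq_conjTranspose]
  have hC : (star A * A).submatrix id f = Aᴴ * A₁ := by
    simp [A₁, submatrix_mul _ _ _ id _ Function.bijective_id, star_eq_conjTranspose]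
  have hA₁ : A₁ = A * (1 : Matrix ι ι 𝕜).submatrix id f := by
    rw [← submatrix_id_id A, ← submatrix_mul _ _ _ id _ Function.bijective_id, Matrix.mul_one]
  have hrank₁ : A₁.rank = A.rank := by
    rw [← rank_conjTranspose_mul_self A₁, ← hW, hrank, star_eq_conjTranspose,
      rank_conjTranspose_mul_self]
  obtain ⟨Z, hZ⟩ : ∃ Z : Matrix κ ι 𝕜, A₁ * Z = A := by
    rw [hA₁] at hrank₁ ⊢
    exact exists_mul_eq_of_range_mulVecLin_le (range_mulVecLin_mul_eq_of_rank_eq hrank₁).ge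
  rw [hW] at hP
  have hfix := mul_mul_conjTranspose_mul_self_eq_self hP
  have hA₁A : A₁ᴴ * A = A₁ᴴ * A₁ * Z := by rw [Matrix.mul_assoc, hZ]
  rw [hC, conjTranspose_mul, conjTranspose_conjTranspose, hA₁A, star_eq_conjTranspose]
  calc Aᴴ * A = Aᴴ * (A₁ * P * (A₁ᴴ * A₁) * Z) := by rw [hfix, hZ]
    _ = Aᴴ * A₁ * P * (A₁ᴴ * A₁ * Z) := by simp only [Matrix.mul_assoc]

end Matrix

theorem nystrom_rank_k_exact_general (l m r k : ℕ) (hrk : r ≤ k)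
    (W : Matrix (Fin l) (Fin l) ℝ) (B : Matrix (Fin l) (Fin m) ℝ)
    (D : Matrix (Fin m) (Fin m) ℝ)
    (G : Matrix (Fin l ⊕ Fin m) (Fin l ⊕ Fin m) ℝ)
    (hG : G = Matrix.fromBlocks W B Bᵀ D)
    (hpsd : G.PosSemidef) (hrG : G.rank = r) (hrW : W.rank = r)
    (C : Matrix (Fin l ⊕ Fin m) (Fin l) ℝ) (hC : C = Matrix.fromRows W Bᵀ)
    -- `Wk` is a best rank-`k` approximation of `W` in Frobenius norm
    (Wk : Matrix (Fin l) (Fin l) ℝ)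
    (hWk_best : ∀ M : Matrix (Fin l) (Fin l) ℝ, M.rank ≤ k →
      frobSq (W - Wk) ≤ frobSq (W - M))
    (Wkp : Matrix (Fin l) (Fin l) ℝ) (hWkp : IsMoorePenrose Wk Wkp) :
    G = C * Wkp * Cᵀ := by
  have hWk : Wk = W := eq_of_forall_frobSq_sub_le (hrW.trans_le hrk) hWk_best
  have hW : G.submatrix Sum.inl Sum.inl = W := by
    ext i j
    simp [hG]
  have hCG : G.submatrix id Sum.inl = C := by
    ext (i | i) j <;> simp [hG, hC]
  have hWkpW : W * Wkp * W = W := hWk ▸ hWkp.1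
  have hG' := hpsd.eq_mul_mul_conjTranspose_of_rank_submatrix_eq Sum.inl
    (by rw [hW, hrW, hrG]) (by rw [hW]; exact hWkpW)
  rwa [hCG, conjTranspose_eq_transpose_of_trivial] at hG'

theorem nystrom_rank_k_exact (l m r k : ℕ) (hrk : r ≤ k) (hkl : k ≤ l)
    (W : Matrix (Fin l) (Fin l) ℝ) (B : Matrix (Fin l) (Fin m) ℝ)
    (D : Matrix (Fin m) (Fin m) ℝ)
    (G : Matrix (Fin l ⊕ Fin m) (Fin l ⊕ Fin m) ℝ)
    (hG : G = Matrix.fromBlocks W B Bᵀ D)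
    (hpsd : G.PosSemidef) (hrG : G.rank = r) (hrW : W.rank = r)
    (C : Matrix (Fin l ⊕ Fin m) (Fin l) ℝ) (hC : C = Matrix.fromRows W Bᵀ)
    -- `Wk` is a best rank-`k` approximation of `W` in Frobenius norm
    (Wk : Matrix (Fin l) (Fin l) ℝ) (hWk_rank : Wk.rank ≤ k)
    (hWk_best : ∀ M : Matrix (Fin l) (Fin l) ℝ, M.rank ≤ k →
      frobSq (W - Wk) ≤ frobSq (W - M))
    (Wkp : Matrix (Fin l) (Fin l) ℝ) (hWkp : IsMoorePenrose Wk Wkp) :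
    G = C * Wkp * Cᵀ :=
  nystrom_rank_k_exact_general l m r k hrk W B D G hG hpsd hrG hrW C hC Wk hWk_best Wkp hWkp
end
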